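/- Momentum-density identity for the inhomogeneous quadratic NLS system (proved inside Lemma 5.2): Let d ≥ 1 be an integer, κ > 0, γ ∈ ℝ, α > 0. Suppose u, v : ℝ × (ℝ^d ∖ {0}) → ℂ are smooth and satisfy pointwise on ℝ × (ℝ^d ∖ {0}) the system i ∂_t u + (1/2)Δu + |x|^{−α} conj(u) v = 0 and i ∂_t v + (κ/2)Δv − γ v + (1/2)|x|^{−α} u² = 0. Then for every k ∈ {1, …, d} and every point (t, x) with x ≠ 0 one has ∂_t ( Im(conj(u) ∂_k u) + Im(conj(v) ∂_k v) ) = (1/4) ∂_k Δ(|u|²) + (κ/4) ∂_k Δ(|v|²) − Σ_{j=1}^d ∂_j Re( ∂_j conj(u) ∂_k u ) − κ Σ_{j=1}^d ∂_j Re( ∂_j conj(v) ∂_k v ) + (1/2) ∂_k Re( |x|^{−α} u² conj(v) ) + Re( ∂_k(|x|^{−α}) u² conj(v) ). -/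

import Mathlib

open MeasureTheory

noncomputable section

/-- The `j`-th spatial direction in `ℝ × ℝ^d`. -/
def eVec (d : ℕ) (j : Fin d) : ℝ × EuclideanSpace ℝ (Fin d) :=
  ((0 : ℝ), EuclideanSpace.single j (1 : ℝ))

/-- The time direction in `ℝ × ℝ^d`. -/
def eT (d : ℕ) : ℝ × EuclideanSpace ℝ (Fin d) :=
  ((1 : ℝ), (0 : EuclideanSpace ℝ (Fin d)))




namespace MomAux

variable {X : Type*} [NormedAddCommGroup X] [NormedSpace ℝ X]
variable {f g : X → ℂ} {p e : X}

lemma fd_conj (hf : DifferentiableAt ℝ f p) :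
    fderiv ℝ (fun q => (starRingEnd ℂ) (f q)) p e = (starRingEnd ℂ) (fderiv ℝ f p e) := by
  have h := (hf.hasFDerivAt.star).fderiv
  simp only [starRingEnd_apply]
  rw [h]; rfl

lemma fd_re (hf : DifferentiableAt ℝ f p) :
    fderiv ℝ (fun q => (f q).re) p e = (fderiv ℝ f p e).re := by
  have h := (Complex.reCLM.hasFDerivAt.comp p hf.hasFDerivAt).fderiv
  have h2 : (fun q => (f q).re) = (⇑Complex.reCLM ∘ f) := rfl
  rw [h2, h]; rfl

lemma fd_im (hf : DifferentiableAt ℝ f p) :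
    fderiv ℝ (fun q => (f q).im) p e = (fderiv ℝ f p e).im := by
  have h := (Complex.imCLM.hasFDerivAt.comp p hf.hasFDerivAt).fderiv
  have h2 : (fun q => (f q).im) = (⇑Complex.imCLM ∘ f) := rfl
  rw [h2, h]; rfl

lemma fd_ofReal {h : X → ℝ} (hf : DifferentiableAt ℝ h p) :
    fderiv ℝ (fun q => ((h q : ℝ) : ℂ)) p e = ((fderiv ℝ h p e : ℝ) : ℂ) := by
  have h1 := (Complex.ofRealCLM.hasFDerivAt.comp p hf.hasFDerivAt).fderiv
  have h2 : (fun q => ((h q : ℝ) : ℂ)) = (⇑Complex.ofRealCLM ∘ h) := rfl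
  rw [h2, h1]; rfl

lemma fd_mul (hf : DifferentiableAt ℝ f p) (hg : DifferentiableAt ℝ g p) :
    fderiv ℝ (fun q => f q * g q) p e = fderiv ℝ f p e * g p + f p * fderiv ℝ g p e := by
  rw [fderiv_fun_mul hf hg]
  simp [smul_eq_mul]; ring

lemma fd_add {Y : Type*} [NormedAddCommGroup Y] [NormedSpace ℝ Y] {F G : X → Y}
    (hf : DifferentiableAt ℝ F p) (hg : DifferentiableAt ℝ G p) :
    fderiv ℝ (fun q => F q + G q) p e = fderiv ℝ F p e + fderiv ℝ G p e := by
  rw [fderiv_fun_add hf hg]; rfl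

lemma cd_D (hf : ContDiffAt ℝ (⊤ : ℕ∞) f p) (e : X) :
    ContDiffAt ℝ (⊤ : ℕ∞) (fun q => fderiv ℝ f q e) p := by
  exact (hf.fderiv_right (m := (⊤:ℕ∞)) (by simp)).clm_apply contDiffAt_const

lemma fd_swap (hf : ContDiffAt ℝ (⊤ : ℕ∞) f p) (e₁ e₂ : X) :
    fderiv ℝ (fun q => fderiv ℝ f q e₁) p e₂ = fderiv ℝ (fun q => fderiv ℝ f q e₂) p e₁ := by
  have hf' : ContDiffAt ℝ ((⊤:ℕ∞) : WithTop ℕ∞) (fderiv ℝ f) p :=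
    hf.fderiv_right (m := (⊤:ℕ∞)) (by simp)
  have hd : DifferentiableAt ℝ (fderiv ℝ f) p :=
    hf'.differentiableAt (by simp)
  have h1 := fderiv_clm_apply (𝕜 := ℝ) hd (differentiableAt_const e₁)
  have h2 := fderiv_clm_apply (𝕜 := ℝ) hd (differentiableAt_const e₂)
  have hsym : IsSymmSndFDerivAt ℝ f p := hf.isSymmSndFDerivAt (by rw [minSmoothness_of_isRCLikeNormedField]; exact_mod_cast ENat.natCast_le_of_coe_top_le_withTop le_rfl 2)
  have e1 : fderiv ℝ (fun q => fderiv ℝ f q e₁) p e₂ = fderiv ℝ (fderiv ℝ f) p e₂ e₁ := by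
    rw [h1]; simp
  have e2 : fderiv ℝ (fun q => fderiv ℝ f q e₂) p e₁ = fderiv ℝ (fderiv ℝ f) p e₁ e₂ := by
    rw [h2]; simp
  rw [e1, e2, hsym e₂ e₁]


lemma da_conj (hf : DifferentiableAt ℝ f p) :
    DifferentiableAt ℝ (fun q => (starRingEnd ℂ) (f q)) p := hf.star

lemma da_re (hf : DifferentiableAt ℝ f p) :
    DifferentiableAt ℝ (fun q => (f q).re) p :=
  (Complex.reCLM.differentiableAt).comp p hf

lemma da_im (hf : DifferentiableAt ℝ f p) :
    DifferentiableAt ℝ (fun q => (f q).im) p :=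
  (Complex.imCLM.differentiableAt).comp p hf

lemma da_ofReal {h : X → ℝ} (hf : DifferentiableAt ℝ h p) :
    DifferentiableAt ℝ (fun q => ((h q : ℝ) : ℂ)) p :=
  (Complex.ofRealCLM.differentiableAt).comp p hf

lemma cda_D {Y : Type*} [NormedAddCommGroup Y] [NormedSpace ℝ Y] {F : X → Y}
    (hf : ContDiffAt ℝ (⊤ : ℕ∞) F p) (e : X) :
    ContDiffAt ℝ (⊤ : ℕ∞) (fun q => fderiv ℝ F q e) p :=
  (hf.fderiv_right (m := (⊤:ℕ∞)) (by simp)).clm_apply contDiffAt_const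

lemma cda_diff {Y : Type*} [NormedAddCommGroup Y] [NormedSpace ℝ Y] {F : X → Y}
    (hf : ContDiffAt ℝ (⊤ : ℕ∞) F p) : DifferentiableAt ℝ F p :=
  hf.differentiableAt (by simp)

lemma fd_cmul (c : ℂ) (hf : DifferentiableAt ℝ f p) :
    fderiv ℝ (fun q => c * f q) p e = c * fderiv ℝ f p e := by
  rw [fderiv_const_mul hf c]; rfl

lemma fd_sub {Y : Type*} [NormedAddCommGroup Y] [NormedSpace ℝ Y] {F G : X → Y}
    (hf : DifferentiableAt ℝ F p) (hg : DifferentiableAt ℝ G p) :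
    fderiv ℝ (fun q => F q - G q) p e = fderiv ℝ F p e - fderiv ℝ G p e := by
  rw [fderiv_fun_sub hf hg]; rfl

lemma fd_sq (hf : DifferentiableAt ℝ f p) :
    fderiv ℝ (fun q => (f q) ^ 2) p e = 2 * f p * fderiv ℝ f p e := by
  have h2 : (fun q => (f q) ^ 2) = fun q => f q * f q := by
    funext q; ring
  rw [h2, fd_mul hf hf]; ring

lemma fd_sum {ι : Type*} {Y : Type*} [NormedAddCommGroup Y] [NormedSpace ℝ Y]
    (s : Finset ι) {F : ι → X → Y}
    (hF : ∀ i ∈ s, DifferentiableAt ℝ (F i) p) :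
    fderiv ℝ (fun q => ∑ i ∈ s, F i q) p e = ∑ i ∈ s, fderiv ℝ (F i) p e := by
  rw [fderiv_fun_sum hF]
  simp

end MomAux

namespace MomAux


variable {d : ℕ} {α : ℝ}

lemma slit_open (d : ℕ) : IsOpen {p : ℝ × EuclideanSpace ℝ (Fin d) | p.2 ≠ 0} :=
  isOpen_compl_singleton.preimage continuous_snd

lemma fderiv_congr_slit {Y : Type*} [NormedAddCommGroup Y] [NormedSpace ℝ Y]
    {f g : ℝ × EuclideanSpace ℝ (Fin d) → Y}
    (h : ∀ q : ℝ × EuclideanSpace ℝ (Fin d), q.2 ≠ 0 → f q = g q)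
    {q : ℝ × EuclideanSpace ℝ (Fin d)} (hq : q.2 ≠ 0) :
    fderiv ℝ f q = fderiv ℝ g q := by
  refine Filter.EventuallyEq.fderiv_eq ?_
  exact Filter.eventuallyEq_of_mem ((slit_open d).mem_nhds hq) (fun z hz => h z hz)

lemma cda_weight {q : ℝ × EuclideanSpace ℝ (Fin d)} (hq : q.2 ≠ 0) :
    ContDiffAt ℝ (⊤ : ℕ∞) (fun q : ℝ × EuclideanSpace ℝ (Fin d) => ‖q.2‖ ^ (-α)) q := by
  have h1 : ContDiffAt ℝ (⊤ : ℕ∞) (fun x : EuclideanSpace ℝ (Fin d) => ‖x‖ ^ (-α)) q.2 := by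
    have hn : ContDiffAt ℝ (⊤ : ℕ∞) (fun x : EuclideanSpace ℝ (Fin d) => ‖x‖) q.2 :=
      contDiffAt_norm ℝ hq
    have hr : ContDiffAt ℝ (⊤ : ℕ∞) (fun t : ℝ => t ^ (-α)) ‖q.2‖ :=
      Real.contDiffAt_rpow_const_of_ne (norm_ne_zero_iff.2 hq)
    exact hr.comp q.2 hn
  exact h1.comp q contDiff_snd.contDiffAt

lemma fd_weight_dir {q : ℝ × EuclideanSpace ℝ (Fin d)} (hq : q.2 ≠ 0) (k : Fin d) :
    fderiv ℝ (fun q : ℝ × EuclideanSpace ℝ (Fin d) => ‖q.2‖ ^ (-α)) q (eVec d k)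
      = fderiv ℝ (fun x : EuclideanSpace ℝ (Fin d) => ‖x‖ ^ (-α)) q.2
          (EuclideanSpace.single k (1 : ℝ)) := by
  have h1 : ContDiffAt ℝ (⊤ : ℕ∞) (fun x : EuclideanSpace ℝ (Fin d) => ‖x‖ ^ (-α)) q.2 := by
    have hn : ContDiffAt ℝ (⊤ : ℕ∞) (fun x : EuclideanSpace ℝ (Fin d) => ‖x‖) q.2 :=
      contDiffAt_norm ℝ hq
    have hr : ContDiffAt ℝ (⊤ : ℕ∞) (fun t : ℝ => t ^ (-α)) ‖q.2‖ :=
      Real.contDiffAt_rpow_const_of_ne (norm_ne_zero_iff.2 hq)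
    exact hr.comp q.2 hn
  have hd : DifferentiableAt ℝ (fun x : EuclideanSpace ℝ (Fin d) => ‖x‖ ^ (-α)) q.2 :=
    h1.differentiableAt (by simp)
  have hc := (hd.hasFDerivAt.comp q hasFDerivAt_snd).fderiv
  have h2 : (fun q : ℝ × EuclideanSpace ℝ (Fin d) => ‖q.2‖ ^ (-α))
      = ((fun x : EuclideanSpace ℝ (Fin d) => ‖x‖ ^ (-α)) ∘ Prod.snd) := rfl
  rw [h2, hc]
  simp [eVec]



variable {w : ℝ × EuclideanSpace ℝ (Fin d) → ℂ}

lemma L_mom (hw : ContDiffOn ℝ (⊤ : ℕ∞) w {p : ℝ × EuclideanSpace ℝ (Fin d) | p.2 ≠ 0})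
    (k : Fin d) {p : ℝ × EuclideanSpace ℝ (Fin d)} (hp : p.2 ≠ 0) :
    fderiv ℝ (fun q => ((starRingEnd ℂ) (w q) * fderiv ℝ w q (eVec d k)).im) p (eT d)
      = ((starRingEnd ℂ) (fderiv ℝ w p (eT d)) * fderiv ℝ w p (eVec d k)).im
        + ((starRingEnd ℂ) (w p)
            * fderiv ℝ (fun q => fderiv ℝ w q (eT d)) p (eVec d k)).im := by
  have hwp : ContDiffAt ℝ (⊤ : ℕ∞) w p := hw.contDiffAt ((slit_open d).mem_nhds hp)
  have dw : DifferentiableAt ℝ w p := cda_diff hwp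
  have dk : DifferentiableAt ℝ (fun q => fderiv ℝ w q (eVec d k)) p :=
    cda_diff (cda_D hwp (eVec d k))
  rw [fd_im ((da_conj dw).fun_mul dk), fd_mul (da_conj dw) dk, fd_conj dw, Complex.add_im,
    fd_swap hwp (eVec d k) (eT d)]

lemma L_term3 (hw : ContDiffOn ℝ (⊤ : ℕ∞) w {p : ℝ × EuclideanSpace ℝ (Fin d) | p.2 ≠ 0})
    (k j : Fin d) {p : ℝ × EuclideanSpace ℝ (Fin d)} (hp : p.2 ≠ 0) :
    fderiv ℝ (fun q => (fderiv ℝ (fun y => (starRingEnd ℂ) (w y)) q (eVec d j)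
        * fderiv ℝ w q (eVec d k)).re) p (eVec d j)
      = (fderiv ℝ (fun z => fderiv ℝ w z (eVec d j)) p (eVec d j)
          * (starRingEnd ℂ) (fderiv ℝ w p (eVec d k))).re
        + (fderiv ℝ (fun q => fderiv ℝ w q (eVec d j)) p (eVec d k)
          * (starRingEnd ℂ) (fderiv ℝ w p (eVec d j))).re := by
  have hwq : ∀ q : ℝ × EuclideanSpace ℝ (Fin d), q.2 ≠ 0 → ContDiffAt ℝ (⊤ : ℕ∞) w q :=
    fun q hq => hw.contDiffAt ((slit_open d).mem_nhds hq)
  have hwp := hwq p hp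
  have hc := fderiv_congr_slit
    (f := fun q => (fderiv ℝ (fun y => (starRingEnd ℂ) (w y)) q (eVec d j)
        * fderiv ℝ w q (eVec d k)).re)
    (g := fun q => ((starRingEnd ℂ) (fderiv ℝ w q (eVec d j)) * fderiv ℝ w q (eVec d k)).re)
    (fun q hq => by beta_reduce; rw [fd_conj (cda_diff (hwq q hq))]) hp
  rw [hc]
  have dDj : DifferentiableAt ℝ (fun q => fderiv ℝ w q (eVec d j)) p :=
    cda_diff (cda_D hwp (eVec d j))
  have dDk : DifferentiableAt ℝ (fun q => fderiv ℝ w q (eVec d k)) p :=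
    cda_diff (cda_D hwp (eVec d k))
  rw [fd_re ((da_conj dDj).fun_mul dDk), fd_mul (da_conj dDj) dDk, fd_conj dDj,
    fd_swap hwp (eVec d k) (eVec d j), Complex.add_re]
  simp only [Complex.mul_re, Complex.conj_re, Complex.conj_im]
  ring

lemma L_term1 (hw : ContDiffOn ℝ (⊤ : ℕ∞) w {p : ℝ × EuclideanSpace ℝ (Fin d) | p.2 ≠ 0})
    (k : Fin d) {p : ℝ × EuclideanSpace ℝ (Fin d)} (hp : p.2 ≠ 0) :
    fderiv ℝ (fun q => ∑ j : Fin d, fderiv ℝ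
        (fun z => fderiv ℝ (fun y => Complex.normSq (w y)) z (eVec d j)) q (eVec d j))
        p (eVec d k)
      = ∑ j : Fin d,
          (2 * (fderiv ℝ (fun q => fderiv ℝ (fun z => fderiv ℝ w z (eVec d j)) q (eVec d j))
                p (eVec d k) * (starRingEnd ℂ) (w p)).re
          + 2 * (fderiv ℝ (fun z => fderiv ℝ w z (eVec d j)) p (eVec d j)
                * (starRingEnd ℂ) (fderiv ℝ w p (eVec d k))).re
          + 4 * (fderiv ℝ (fun q => fderiv ℝ w q (eVec d j)) p (eVec d k)
                * (starRingEnd ℂ) (fderiv ℝ w p (eVec d j))).re) := by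
  have hwq : ∀ q : ℝ × EuclideanSpace ℝ (Fin d), q.2 ≠ 0 → ContDiffAt ℝ (⊤ : ℕ∞) w q :=
    fun q hq => hw.contDiffAt ((slit_open d).mem_nhds hq)
  have hwp := hwq p hp
  have h1 : ∀ (e : ℝ × EuclideanSpace ℝ (Fin d)) (z : ℝ × EuclideanSpace ℝ (Fin d)), z.2 ≠ 0 →
      fderiv ℝ (fun y => (Complex.normSq (w y) : ℝ)) z e
        = (fderiv ℝ w z e * (starRingEnd ℂ) (w z)).re
          + (w z * (starRingEnd ℂ) (fderiv ℝ w z e)).re := by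
    intro e z hz
    have dw := cda_diff (hwq z hz)
    have hfun : (fun y => (Complex.normSq (w y) : ℝ))
        = fun y => (w y * (starRingEnd ℂ) (w y)).re := by
      funext y; rw [Complex.mul_conj]; simp
    rw [hfun, fd_re (dw.fun_mul (da_conj dw)), fd_mul dw (da_conj dw), fd_conj dw, Complex.add_re]
  have h2 : ∀ (j : Fin d) (q : ℝ × EuclideanSpace ℝ (Fin d)), q.2 ≠ 0 →
      fderiv ℝ (fun z => fderiv ℝ (fun y => Complex.normSq (w y)) z (eVec d j)) q (eVec d j)
        = ((fderiv ℝ (fun z => fderiv ℝ w z (eVec d j)) q (eVec d j) * (starRingEnd ℂ) (w q)).re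
            + (fderiv ℝ w q (eVec d j) * (starRingEnd ℂ) (fderiv ℝ w q (eVec d j))).re)
          + ((fderiv ℝ w q (eVec d j) * (starRingEnd ℂ) (fderiv ℝ w q (eVec d j))).re
            + (w q * (starRingEnd ℂ)
                (fderiv ℝ (fun z => fderiv ℝ w z (eVec d j)) q (eVec d j))).re) := by
    intro j q hq
    have hc := fderiv_congr_slit
      (f := fun z => fderiv ℝ (fun y => Complex.normSq (w y)) z (eVec d j))
      (g := fun z => (fderiv ℝ w z (eVec d j) * (starRingEnd ℂ) (w z)).re
          + (w z * (starRingEnd ℂ) (fderiv ℝ w z (eVec d j))).re)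
      (fun z hz => h1 (eVec d j) z hz) hq
    rw [hc]
    have hq' := hwq q hq
    have dw := cda_diff hq'
    have dDj : DifferentiableAt ℝ (fun z => fderiv ℝ w z (eVec d j)) q :=
      cda_diff (cda_D hq' (eVec d j))
    rw [fd_add (da_re (dDj.fun_mul (da_conj dw))) (da_re (dw.fun_mul (da_conj dDj))),
      fd_re (dDj.fun_mul (da_conj dw)), fd_re (dw.fun_mul (da_conj dDj)),
      fd_mul dDj (da_conj dw), fd_mul dw (da_conj dDj), fd_conj dw, fd_conj dDj,
      Complex.add_re, Complex.add_re]
  have h3 := fderiv_congr_slit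
    (f := fun q => ∑ j : Fin d, fderiv ℝ
        (fun z => fderiv ℝ (fun y => Complex.normSq (w y)) z (eVec d j)) q (eVec d j))
    (g := fun q => ∑ j : Fin d,
        (((fderiv ℝ (fun z => fderiv ℝ w z (eVec d j)) q (eVec d j) * (starRingEnd ℂ) (w q)).re
            + (fderiv ℝ w q (eVec d j) * (starRingEnd ℂ) (fderiv ℝ w q (eVec d j))).re)
          + ((fderiv ℝ w q (eVec d j) * (starRingEnd ℂ) (fderiv ℝ w q (eVec d j))).re
            + (w q * (starRingEnd ℂ)
                (fderiv ℝ (fun z => fderiv ℝ w z (eVec d j)) q (eVec d j))).re)))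
    (fun q hq => Finset.sum_congr rfl (fun j _ => h2 j q hq)) hp
  rw [h3]
  have dw := cda_diff hwp
  have hDj : ∀ j : Fin d, DifferentiableAt ℝ (fun z => fderiv ℝ w z (eVec d j)) p :=
    fun j => cda_diff (cda_D hwp (eVec d j))
  have hA2 : ∀ j : Fin d,
      DifferentiableAt ℝ (fun q => fderiv ℝ (fun z => fderiv ℝ w z (eVec d j)) q (eVec d j)) p :=
    fun j => cda_diff (cda_D (cda_D hwp (eVec d j)) (eVec d j))
  rw [fd_sum Finset.univ (fun j _ =>
    (((da_re ((hA2 j).fun_mul (da_conj dw))).fun_add (da_re ((hDj j).fun_mul (da_conj (hDj j))))).fun_add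
      ((da_re ((hDj j).fun_mul (da_conj (hDj j)))).fun_add (da_re (dw.fun_mul (da_conj (hA2 j)))))))]
  refine Finset.sum_congr rfl (fun j _ => ?_)
  rw [fd_add ((da_re ((hA2 j).fun_mul (da_conj dw))).fun_add (da_re ((hDj j).fun_mul (da_conj (hDj j)))))
      ((da_re ((hDj j).fun_mul (da_conj (hDj j)))).fun_add (da_re (dw.fun_mul (da_conj (hA2 j))))),
    fd_add (da_re ((hA2 j).fun_mul (da_conj dw))) (da_re ((hDj j).fun_mul (da_conj (hDj j)))),
    fd_add (da_re ((hDj j).fun_mul (da_conj (hDj j)))) (da_re (dw.fun_mul (da_conj (hA2 j)))),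
    fd_re ((hA2 j).fun_mul (da_conj dw)), fd_re ((hDj j).fun_mul (da_conj (hDj j))),
    fd_re (dw.fun_mul (da_conj (hA2 j))),
    fd_mul (hA2 j) (da_conj dw), fd_mul (hDj j) (da_conj (hDj j)),
    fd_mul dw (da_conj (hA2 j)), fd_conj dw, fd_conj (hDj j), fd_conj (hA2 j)]
  simp only [Complex.add_re, Complex.mul_re, Complex.conj_re, Complex.conj_im]
  ring

end MomAux


set_option maxHeartbeats 2000000 in
open MomAux in
/-- Momentum-density identity for the inhomogeneous quadratic NLS system
(proved inside Lemma 5.2). -/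
theorem momentum_density_identity_system
    (d : ℕ) (hd : 1 ≤ d) (κ γ α : ℝ) (hκ : 0 < κ) (hα : 0 < α)
    (u v : ℝ × EuclideanSpace ℝ (Fin d) → ℂ)
    (hu : ContDiffOn ℝ (⊤ : ℕ∞) u {p : ℝ × EuclideanSpace ℝ (Fin d) | p.2 ≠ 0})
    (hv : ContDiffOn ℝ (⊤ : ℕ∞) v {p : ℝ × EuclideanSpace ℝ (Fin d) | p.2 ≠ 0})
    (heq1 : ∀ p : ℝ × EuclideanSpace ℝ (Fin d), p.2 ≠ 0 →
      Complex.I * fderiv ℝ u p (eT d) +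
        (1 / 2 : ℂ) *
          (∑ j : Fin d, fderiv ℝ (fun q => fderiv ℝ u q (eVec d j)) p (eVec d j)) +
        Complex.ofReal (‖p.2‖ ^ (-α)) * (starRingEnd ℂ) (u p) * v p = 0)
    (heq2 : ∀ p : ℝ × EuclideanSpace ℝ (Fin d), p.2 ≠ 0 →
      Complex.I * fderiv ℝ v p (eT d) +
        (Complex.ofReal κ / 2) *
          (∑ j : Fin d, fderiv ℝ (fun q => fderiv ℝ v q (eVec d j)) p (eVec d j)) -
        Complex.ofReal γ * v p +
        (1 / 2 : ℂ) * Complex.ofReal (‖p.2‖ ^ (-α)) * (u p) ^ 2 = 0) :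
    ∀ (k : Fin d) (p : ℝ × EuclideanSpace ℝ (Fin d)), p.2 ≠ 0 →
      fderiv ℝ
          (fun q => ((starRingEnd ℂ) (u q) * fderiv ℝ u q (eVec d k)).im
            + ((starRingEnd ℂ) (v q) * fderiv ℝ v q (eVec d k)).im)
          p (eT d) =
        (1 / 4) * fderiv ℝ
            (fun q => ∑ j : Fin d, fderiv ℝ
              (fun z => fderiv ℝ (fun w => Complex.normSq (u w)) z (eVec d j))
              q (eVec d j))
            p (eVec d k)
        + (κ / 4) * fderiv ℝ
            (fun q => ∑ j : Fin d, fderiv ℝ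
              (fun z => fderiv ℝ (fun w => Complex.normSq (v w)) z (eVec d j))
              q (eVec d j))
            p (eVec d k)
        - (∑ j : Fin d, fderiv ℝ
            (fun q => (fderiv ℝ (fun w => (starRingEnd ℂ) (u w)) q (eVec d j)
                * fderiv ℝ u q (eVec d k)).re)
            p (eVec d j))
        - κ * (∑ j : Fin d, fderiv ℝ
            (fun q => (fderiv ℝ (fun w => (starRingEnd ℂ) (v w)) q (eVec d j)
                * fderiv ℝ v q (eVec d k)).re)
            p (eVec d j))
        + (1 / 2) * fderiv ℝ
            (fun q => (Complex.ofReal (‖q.2‖ ^ (-α)) * (u q) ^ 2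
                * (starRingEnd ℂ) (v q)).re)
            p (eVec d k)
        + (fderiv ℝ (fun x : EuclideanSpace ℝ (Fin d) => ‖x‖ ^ (-α)) p.2
              (EuclideanSpace.single k (1 : ℝ)))
            * ((u p) ^ 2 * (starRingEnd ℂ) (v p)).re := by
  intro k p hp
  have hUq : ∀ q : ℝ × EuclideanSpace ℝ (Fin d), q.2 ≠ 0 → ContDiffAt ℝ (⊤ : ℕ∞) u q :=
    fun q hq => hu.contDiffAt ((slit_open d).mem_nhds hq)
  have hVq : ∀ q : ℝ × EuclideanSpace ℝ (Fin d), q.2 ≠ 0 → ContDiffAt ℝ (⊤ : ℕ∞) v q :=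
    fun q hq => hv.contDiffAt ((slit_open d).mem_nhds hq)
  have hup := hUq p hp
  have hvp := hVq p hp
  have du : DifferentiableAt ℝ u p := cda_diff hup
  have dv : DifferentiableAt ℝ v p := cda_diff hvp
  have duk : DifferentiableAt ℝ (fun q => fderiv ℝ u q (eVec d k)) p :=
    cda_diff (cda_D hup (eVec d k))
  have dvk : DifferentiableAt ℝ (fun q => fderiv ℝ v q (eVec d k)) p :=
    cda_diff (cda_D hvp (eVec d k))
  have dutT : DifferentiableAt ℝ (fun q => fderiv ℝ u q (eT d)) p :=
    cda_diff (cda_D hup (eT d))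
  have dvtT : DifferentiableAt ℝ (fun q => fderiv ℝ v q (eT d)) p :=
    cda_diff (cda_D hvp (eT d))
  have dWr : DifferentiableAt ℝ (fun q : ℝ × EuclideanSpace ℝ (Fin d) => ‖q.2‖ ^ (-α)) p := cda_diff (cda_weight hp)
  have dWc : DifferentiableAt ℝ (fun q : ℝ × EuclideanSpace ℝ (Fin d) => Complex.ofReal (‖q.2‖ ^ (-α))) p :=
    da_ofReal dWr
  have dA2u : ∀ j : Fin d,
      DifferentiableAt ℝ (fun q => fderiv ℝ (fun z => fderiv ℝ u z (eVec d j)) q (eVec d j)) p :=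
    fun j => cda_diff (cda_D (cda_D hup (eVec d j)) (eVec d j))
  have dA2v : ∀ j : Fin d,
      DifferentiableAt ℝ (fun q => fderiv ℝ (fun z => fderiv ℝ v z (eVec d j)) q (eVec d j)) p :=
    fun j => cda_diff (cda_D (cda_D hvp (eVec d j)) (eVec d j))
  have dSu : DifferentiableAt ℝ
      (fun q => ∑ j : Fin d, fderiv ℝ (fun z => fderiv ℝ u z (eVec d j)) q (eVec d j)) p :=
    DifferentiableAt.fun_sum (fun j _ => dA2u j)
  have dSv : DifferentiableAt ℝ
      (fun q => ∑ j : Fin d, fderiv ℝ (fun z => fderiv ℝ v z (eVec d j)) q (eVec d j)) p :=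
    DifferentiableAt.fun_sum (fun j _ => dA2v j)
  -- equations at p
  have E1 := heq1 p hp
  have E2 := heq2 p hp
  -- differentiated equation 1
  have E1k : fderiv ℝ (fun q : ℝ × EuclideanSpace ℝ (Fin d) => Complex.I * fderiv ℝ u q (eT d) +
      (1 / 2 : ℂ) * (∑ j : Fin d, fderiv ℝ (fun z => fderiv ℝ u z (eVec d j)) q (eVec d j)) +
      Complex.ofReal (‖q.2‖ ^ (-α)) * (starRingEnd ℂ) (u q) * v q) p (eVec d k) = 0 := by
    rw [fderiv_congr_slit
      (f := fun q : ℝ × EuclideanSpace ℝ (Fin d) => Complex.I * fderiv ℝ u q (eT d) +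
        (1 / 2 : ℂ) * (∑ j : Fin d, fderiv ℝ (fun z => fderiv ℝ u z (eVec d j)) q (eVec d j)) +
        Complex.ofReal (‖q.2‖ ^ (-α)) * (starRingEnd ℂ) (u q) * v q)
      (g := fun _ => (0 : ℂ)) (fun q hq => heq1 q hq) hp]
    simp
  rw [fd_add ((dutT.const_mul Complex.I).fun_add (dSu.const_mul (1 / 2 : ℂ)))
      ((dWc.fun_mul (da_conj du)).fun_mul dv),
    fd_add (dutT.const_mul Complex.I) (dSu.const_mul (1 / 2 : ℂ)),
    fd_cmul Complex.I dutT, fd_cmul (1 / 2 : ℂ) dSu,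
    fd_sum Finset.univ (fun j _ => dA2u j),
    fd_mul (dWc.fun_mul (da_conj du)) dv, fd_mul dWc (da_conj du), fd_conj du,
    fd_ofReal dWr, fd_weight_dir hp k] at E1k
  -- differentiated equation 2
  have E2k : fderiv ℝ (fun q : ℝ × EuclideanSpace ℝ (Fin d) => Complex.I * fderiv ℝ v q (eT d) +
      (Complex.ofReal κ / 2) *
        (∑ j : Fin d, fderiv ℝ (fun z => fderiv ℝ v z (eVec d j)) q (eVec d j)) -
      Complex.ofReal γ * v q +
      (1 / 2 : ℂ) * Complex.ofReal (‖q.2‖ ^ (-α)) * (u q) ^ 2) p (eVec d k) = 0 := by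
    rw [fderiv_congr_slit
      (f := fun q : ℝ × EuclideanSpace ℝ (Fin d) => Complex.I * fderiv ℝ v q (eT d) +
        (Complex.ofReal κ / 2) *
          (∑ j : Fin d, fderiv ℝ (fun z => fderiv ℝ v z (eVec d j)) q (eVec d j)) -
        Complex.ofReal γ * v q +
        (1 / 2 : ℂ) * Complex.ofReal (‖q.2‖ ^ (-α)) * (u q) ^ 2)
      (g := fun _ => (0 : ℂ)) (fun q hq => heq2 q hq) hp]
    simp
  rw [fd_add (((dvtT.const_mul Complex.I).fun_add (dSv.const_mul (Complex.ofReal κ / 2))).fun_sub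
        (dv.const_mul (Complex.ofReal γ)))
      ((dWc.const_mul (1 / 2 : ℂ)).fun_mul (du.fun_pow 2)),
    fd_sub ((dvtT.const_mul Complex.I).fun_add (dSv.const_mul (Complex.ofReal κ / 2)))
      (dv.const_mul (Complex.ofReal γ)),
    fd_add (dvtT.const_mul Complex.I) (dSv.const_mul (Complex.ofReal κ / 2)),
    fd_cmul Complex.I dvtT, fd_cmul (Complex.ofReal κ / 2) dSv,
    fd_sum Finset.univ (fun j _ => dA2v j),
    fd_cmul (Complex.ofReal γ) dv,
    fd_mul (dWc.const_mul (1 / 2 : ℂ)) (du.fun_pow 2),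
    fd_cmul (1 / 2 : ℂ) dWc, fd_ofReal dWr, fd_weight_dir hp k, fd_sq du] at E2k
  -- coefficient normalizations
  have hhalf : (1 / 2 : ℂ) = Complex.ofReal (1 / 2 : ℝ) := by norm_num
  have hkap : (Complex.ofReal κ / 2 : ℂ) = Complex.ofReal (κ / 2 : ℝ) := by push_cast; ring
  rw [hhalf] at E1 E1k
  rw [hhalf, hkap] at E2 E2k
  -- solve for the time derivatives
  have haT : fderiv ℝ u p (eT d) = Complex.I * (Complex.ofReal (1 / 2 : ℝ) *
      (∑ j : Fin d, fderiv ℝ (fun z => fderiv ℝ u z (eVec d j)) p (eVec d j)) +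
      Complex.ofReal (‖p.2‖ ^ (-α)) * (starRingEnd ℂ) (u p) * v p) := by
    linear_combination (-Complex.I) * E1 + (fderiv ℝ u p (eT d)) * Complex.I_sq
  have hbT : fderiv ℝ v p (eT d) = Complex.I * (Complex.ofReal (κ / 2 : ℝ) *
      (∑ j : Fin d, fderiv ℝ (fun z => fderiv ℝ v z (eVec d j)) p (eVec d j)) -
      Complex.ofReal γ * v p +
      Complex.ofReal (1 / 2 : ℝ) * Complex.ofReal (‖p.2‖ ^ (-α)) * (u p) ^ 2) := by
    linear_combination (-Complex.I) * E2 + (fderiv ℝ v p (eT d)) * Complex.I_sq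
  have haTk : fderiv ℝ (fun q => fderiv ℝ u q (eT d)) p (eVec d k) =
      Complex.I * (Complex.ofReal (1 / 2 : ℝ) *
        (∑ j : Fin d, fderiv ℝ
          (fun q => fderiv ℝ (fun z => fderiv ℝ u z (eVec d j)) q (eVec d j)) p (eVec d k)) +
        (Complex.ofReal (fderiv ℝ (fun x : EuclideanSpace ℝ (Fin d) => ‖x‖ ^ (-α)) p.2
            (EuclideanSpace.single k (1 : ℝ))) * (starRingEnd ℂ) (u p) +
          Complex.ofReal (‖p.2‖ ^ (-α)) * (starRingEnd ℂ) (fderiv ℝ u p (eVec d k))) * v p +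
        Complex.ofReal (‖p.2‖ ^ (-α)) * (starRingEnd ℂ) (u p) * fderiv ℝ v p (eVec d k)) := by
    linear_combination (-Complex.I) * E1k +
      (fderiv ℝ (fun q => fderiv ℝ u q (eT d)) p (eVec d k)) * Complex.I_sq
  have hbTk : fderiv ℝ (fun q => fderiv ℝ v q (eT d)) p (eVec d k) =
      Complex.I * (Complex.ofReal (κ / 2 : ℝ) *
        (∑ j : Fin d, fderiv ℝ
          (fun q => fderiv ℝ (fun z => fderiv ℝ v z (eVec d j)) q (eVec d j)) p (eVec d k)) -
        Complex.ofReal γ * fderiv ℝ v p (eVec d k) +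
        (Complex.ofReal (1 / 2 : ℝ) *
            Complex.ofReal (fderiv ℝ (fun x : EuclideanSpace ℝ (Fin d) => ‖x‖ ^ (-α)) p.2
              (EuclideanSpace.single k (1 : ℝ))) * (u p) ^ 2 +
          Complex.ofReal (1 / 2 : ℝ) * Complex.ofReal (‖p.2‖ ^ (-α)) *
            (2 * u p * fderiv ℝ u p (eVec d k)))) := by
    linear_combination (-Complex.I) * E2k +
      (fderiv ℝ (fun q => fderiv ℝ v q (eT d)) p (eVec d k)) * Complex.I_sq
  have hT1u : (∑ j : Fin d,
        (2 * (fderiv ℝ (fun q => fderiv ℝ (fun z => fderiv ℝ u z (eVec d j)) q (eVec d j)) p (eVec d k) * (starRingEnd ℂ) (u p)).re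
        + 2 * (fderiv ℝ (fun z => fderiv ℝ u z (eVec d j)) p (eVec d j) * (starRingEnd ℂ) (fderiv ℝ u p (eVec d k))).re
        + 4 * (fderiv ℝ (fun q => fderiv ℝ u q (eVec d j)) p (eVec d k) * (starRingEnd ℂ) (fderiv ℝ u p (eVec d j))).re))
      = 2 * ((∑ j : Fin d, fderiv ℝ (fun q => fderiv ℝ (fun z => fderiv ℝ u z (eVec d j)) q (eVec d j)) p (eVec d k)) * (starRingEnd ℂ) (u p)).re
        + 2 * ((∑ j : Fin d, fderiv ℝ (fun z => fderiv ℝ u z (eVec d j)) p (eVec d j)) * (starRingEnd ℂ) (fderiv ℝ u p (eVec d k))).re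
        + 4 * (∑ j : Fin d, (fderiv ℝ (fun q => fderiv ℝ u q (eVec d j)) p (eVec d k) * (starRingEnd ℂ) (fderiv ℝ u p (eVec d j))).re) := by
    rw [Finset.sum_mul, Complex.re_sum, Finset.sum_mul, Complex.re_sum, Finset.mul_sum,
      Finset.mul_sum, Finset.mul_sum, ← Finset.sum_add_distrib, ← Finset.sum_add_distrib]
  have hT3u : (∑ j : Fin d,
        ((fderiv ℝ (fun z => fderiv ℝ u z (eVec d j)) p (eVec d j) * (starRingEnd ℂ) (fderiv ℝ u p (eVec d k))).re + (fderiv ℝ (fun q => fderiv ℝ u q (eVec d j)) p (eVec d k) * (starRingEnd ℂ) (fderiv ℝ u p (eVec d j))).re))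
      = ((∑ j : Fin d, fderiv ℝ (fun z => fderiv ℝ u z (eVec d j)) p (eVec d j)) * (starRingEnd ℂ) (fderiv ℝ u p (eVec d k))).re
        + ∑ j : Fin d, (fderiv ℝ (fun q => fderiv ℝ u q (eVec d j)) p (eVec d k) * (starRingEnd ℂ) (fderiv ℝ u p (eVec d j))).re := by
    rw [Finset.sum_mul, Complex.re_sum, ← Finset.sum_add_distrib]
  have hT1v : (∑ j : Fin d,
        (2 * (fderiv ℝ (fun q => fderiv ℝ (fun z => fderiv ℝ v z (eVec d j)) q (eVec d j)) p (eVec d k) * (starRingEnd ℂ) (v p)).re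
        + 2 * (fderiv ℝ (fun z => fderiv ℝ v z (eVec d j)) p (eVec d j) * (starRingEnd ℂ) (fderiv ℝ v p (eVec d k))).re
        + 4 * (fderiv ℝ (fun q => fderiv ℝ v q (eVec d j)) p (eVec d k) * (starRingEnd ℂ) (fderiv ℝ v p (eVec d j))).re))
      = 2 * ((∑ j : Fin d, fderiv ℝ (fun q => fderiv ℝ (fun z => fderiv ℝ v z (eVec d j)) q (eVec d j)) p (eVec d k)) * (starRingEnd ℂ) (v p)).re
        + 2 * ((∑ j : Fin d, fderiv ℝ (fun z => fderiv ℝ v z (eVec d j)) p (eVec d j)) * (starRingEnd ℂ) (fderiv ℝ v p (eVec d k))).re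
        + 4 * (∑ j : Fin d, (fderiv ℝ (fun q => fderiv ℝ v q (eVec d j)) p (eVec d k) * (starRingEnd ℂ) (fderiv ℝ v p (eVec d j))).re) := by
    rw [Finset.sum_mul, Complex.re_sum, Finset.sum_mul, Complex.re_sum, Finset.mul_sum,
      Finset.mul_sum, Finset.mul_sum, ← Finset.sum_add_distrib, ← Finset.sum_add_distrib]
  have hT3v : (∑ j : Fin d,
        ((fderiv ℝ (fun z => fderiv ℝ v z (eVec d j)) p (eVec d j) * (starRingEnd ℂ) (fderiv ℝ v p (eVec d k))).re + (fderiv ℝ (fun q => fderiv ℝ v q (eVec d j)) p (eVec d k) * (starRingEnd ℂ) (fderiv ℝ v p (eVec d j))).re))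
      = ((∑ j : Fin d, fderiv ℝ (fun z => fderiv ℝ v z (eVec d j)) p (eVec d j)) * (starRingEnd ℂ) (fderiv ℝ v p (eVec d k))).re
        + ∑ j : Fin d, (fderiv ℝ (fun q => fderiv ℝ v q (eVec d j)) p (eVec d k) * (starRingEnd ℂ) (fderiv ℝ v p (eVec d j))).re := by
    rw [Finset.sum_mul, Complex.re_sum, ← Finset.sum_add_distrib]
  -- rewrite the goal
  have h3u : (∑ j : Fin d, fderiv ℝ
      (fun q => (fderiv ℝ (fun w => (starRingEnd ℂ) (u w)) q (eVec d j)
          * fderiv ℝ u q (eVec d k)).re) p (eVec d j))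
      = ∑ j : Fin d,
        ((fderiv ℝ (fun z => fderiv ℝ u z (eVec d j)) p (eVec d j)
            * (starRingEnd ℂ) (fderiv ℝ u p (eVec d k))).re
        + (fderiv ℝ (fun q => fderiv ℝ u q (eVec d j)) p (eVec d k)
            * (starRingEnd ℂ) (fderiv ℝ u p (eVec d j))).re) :=
    Finset.sum_congr rfl (fun j _ => L_term3 hu k j hp)
  have h3v : (∑ j : Fin d, fderiv ℝ
      (fun q => (fderiv ℝ (fun w => (starRingEnd ℂ) (v w)) q (eVec d j)
          * fderiv ℝ v q (eVec d k)).re) p (eVec d j))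
      = ∑ j : Fin d,
        ((fderiv ℝ (fun z => fderiv ℝ v z (eVec d j)) p (eVec d j)
            * (starRingEnd ℂ) (fderiv ℝ v p (eVec d k))).re
        + (fderiv ℝ (fun q => fderiv ℝ v q (eVec d j)) p (eVec d k)
            * (starRingEnd ℂ) (fderiv ℝ v p (eVec d j))).re) :=
    Finset.sum_congr rfl (fun j _ => L_term3 hv k j hp)
  rw [fd_add (da_im ((da_conj du).fun_mul duk)) (da_im ((da_conj dv).fun_mul dvk)),
    L_mom hu k hp, L_mom hv k hp, L_term1 hu k hp, L_term1 hv k hp, hT1u, hT1v,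
    h3u, h3v, hT3u, hT3v,
    fd_re ((dWc.fun_mul (du.fun_pow 2)).fun_mul (da_conj dv)),
    fd_mul (dWc.fun_mul (du.fun_pow 2)) (da_conj dv), fd_mul dWc (du.fun_pow 2),
    fd_sq du, fd_conj dv, fd_ofReal dWr, fd_weight_dir hp k,
    haT, hbT, haTk, hbTk]
  simp only [Complex.add_re, Complex.add_im, Complex.sub_re,
    Complex.sub_im, Complex.mul_re, Complex.mul_im, Complex.neg_re, Complex.neg_im,
    Complex.I_re, Complex.I_im, Complex.conj_re, Complex.conj_im, Complex.ofReal_re,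
    Complex.ofReal_im, Complex.re_ofNat, Complex.im_ofNat, Complex.one_re, Complex.one_im,
    Complex.zero_re, Complex.zero_im, pow_two]
  ring

end
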